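/- The weighted Cheeger constant is bounded above by √(2·δ_max·λ₂(L_W)/w_min), where δ_max is the maximum weighted node degree and w_min the minimum node weight. -/

import Mathlib

/-!
Let `x` be a unit eigenvector of `L_W` for `λ₂` and `u = W^{-1/2} x`, so `(D - A) u = λ₂ W u`.
By connectivity the kernel of `L_W` is spanned by `W^{1/2} 𝟙`, hence `λ₂ ≠ 0`, `x ⊥ W^{1/2} 𝟙`
and `∑ w_i u_i = 0`. Replacing `u` by `-u` if necessary, `f = u⁺` is nonzero and supported on a
set of at most half the total weight, so every level set of `f` has Cheeger ratio at least `h_W`.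
The co-area formula then gives `2 h_W ∑ w f² ≤ ∑ a_ij |f_i² - f_j²|`, Cauchy–Schwarz bounds the
right side by `(∑ a_ij (f_i - f_j)²)^{1/2} (∑ a_ij (f_i + f_j)²)^{1/2}`, and these two sums are
at most `2 λ₂ ∑ w f²` and `(4 δ_max / w_min) ∑ w f²`.
-/

open Matrix Finset

section

variable {ι : Type*} [Fintype ι] [DecidableEq ι]

def laplacian (a : Matrix ι ι ℝ) : Matrix ι ι ℝ :=
  diagonal (fun i => ∑ j, a i j) - a

noncomputable def normalizedLaplacian (a : Matrix ι ι ℝ) (w : ι → ℝ) : Matrix ι ι ℝ :=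
  diagonal (fun i => (√(w i))⁻¹) * laplacian a * diagonal (fun i => (√(w i))⁻¹)

def cutWeight (a : Matrix ι ι ℝ) (S : Finset ι) : ℝ :=
  ∑ i ∈ S, ∑ j ∈ Sᶜ, a i j

omit [DecidableEq ι] in
theorem Matrix.IsSymm.sum_sum_mul_swap {a : Matrix ι ι ℝ} (ha : a.IsSymm) (F : ι → ι → ℝ) :
    ∑ i, ∑ j, a i j * F i j = ∑ i, ∑ j, a i j * F j i := by
  rw [sum_comm]
  simp_rw [ha.apply]

theorem laplacian_mulVec_apply (a : Matrix ι ι ℝ) (u : ι → ℝ) (i : ι) :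
    (laplacian a *ᵥ u) i = ∑ j, a i j * (u i - u j) := by
  rw [laplacian, sub_mulVec, Pi.sub_apply, mulVec_diagonal]
  simp [mulVec, dotProduct, mul_sub, sum_mul]

theorem laplacian_mulVec_const (a : Matrix ι ι ℝ) (c : ℝ) :
    laplacian a *ᵥ (fun _ => c) = 0 := by
  ext i
  simp [laplacian_mulVec_apply]

theorem sum_sum_mul_sub_sq {a : Matrix ι ι ℝ} (ha : a.IsSymm) (u : ι → ℝ) :
    ∑ i, ∑ j, a i j * (u i - u j) ^ 2 = 2 * (u ⬝ᵥ laplacian a *ᵥ u) := by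
  have hquad : u ⬝ᵥ laplacian a *ᵥ u = ∑ i, ∑ j, a i j * (u i * (u i - u j)) := by
    simp only [dotProduct, laplacian_mulVec_apply, mul_sum]
    exact sum_congr rfl fun i _ => sum_congr rfl fun j _ => by ring
  rw [two_mul, hquad]
  nth_rw 2 [ha.sum_sum_mul_swap]
  simp only [← sum_add_distrib, ← mul_add]
  exact sum_congr rfl fun i _ => sum_congr rfl fun j _ => by ring

omit [DecidableEq ι] in
theorem two_mul_sum_sum_mul_posPart_sub {a : Matrix ι ι ℝ} (ha : a.IsSymm) (g : ι → ℝ) :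
    2 * ∑ i, ∑ j, a i j * (g i - g j)⁺ = ∑ i, ∑ j, a i j * |g i - g j| := by
  have hanti : ∑ i, ∑ j, a i j * (g i - g j) = 0 := by
    have hswap := ha.sum_sum_mul_swap fun i j => g i - g j
    have hneg : ∑ i, ∑ j, a i j * (g j - g i) = -∑ i, ∑ j, a i j * (g i - g j) := by
      simp only [← sum_neg_distrib]
      exact sum_congr rfl fun i _ => sum_congr rfl fun j _ => by ring
    linarith
  have hpos (x : ℝ) : 2 * x⁺ = x + |x| := by
    rcases le_total 0 x with h | h
    · rw [posPart_eq_self.2 h, abs_of_nonneg h, two_mul]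
    · rw [posPart_eq_zero.2 h, abs_of_nonpos h]; ring
  calc 2 * ∑ i, ∑ j, a i j * (g i - g j)⁺
      = ∑ i, ∑ j, a i j * (g i - g j) + ∑ i, ∑ j, a i j * |g i - g j| := by
        simp only [mul_sum, ← sum_add_distrib, ← mul_add, ← hpos]
        exact sum_congr rfl fun i _ => sum_congr rfl fun j _ => by ring
    _ = ∑ i, ∑ j, a i j * |g i - g j| := by rw [hanti, zero_add]

theorem cutWeight_eq_sum_sum_ite (a : Matrix ι ι ℝ) (S : Finset ι) :
    cutWeight a S = ∑ i, ∑ j, if i ∈ S ∧ j ∉ S then a i j else 0 := by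
  simp only [ite_and, sum_ite_irrel, sum_const_zero, sum_ite_mem, univ_inter, ← mem_compl]
  rfl

theorem posPart_sub_eq_posPart_sub_truncate_add {x y t : ℝ} (hx : 0 ≤ x) (hy : 0 ≤ y)
    (ht : 0 ≤ t) (hxt : 0 < x → t ≤ x) (hyt : 0 < y → t ≤ y) :
    (x - y)⁺ = ((x - t)⁺ - (y - t)⁺)⁺ + if 0 < x ∧ ¬ 0 < y then t else 0 := by
  simp only [posPart_def, max_def]
  split_ifs <;> grind

omit [DecidableEq ι] in
theorem sum_mul_eq_sum_mul_posPart_sub_add (w : ι → ℝ) {g : ι → ℝ} (hg : 0 ≤ g) {t : ℝ}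
    (ht : 0 ≤ t) (hgt : ∀ i, 0 < g i → t ≤ g i) :
    ∑ i, w i * g i = ∑ i, w i * (g i - t)⁺ + t * ∑ i ∈ {i | 0 < g i}, w i := by
  have hsplit (i : ι) : w i * g i = w i * (g i - t)⁺ + if 0 < g i then t * w i else 0 := by
    by_cases hi : 0 < g i
    · rw [if_pos hi, posPart_eq_self.2 (sub_nonneg.2 (hgt i hi))]
      ring
    · have hgi : g i = 0 := le_antisymm (not_lt.1 hi) (hg i)
      simp [hgi, ht]
  rw [sum_congr rfl fun i _ => hsplit i, sum_add_distrib, ← sum_filter, mul_sum]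

theorem sum_sum_mul_posPart_sub_eq_add_cutWeight (a : Matrix ι ι ℝ) {g : ι → ℝ} (hg : 0 ≤ g)
    {t : ℝ} (ht : 0 ≤ t) (hgt : ∀ i, 0 < g i → t ≤ g i) :
    ∑ i, ∑ j, a i j * (g i - g j)⁺
      = ∑ i, ∑ j, a i j * ((g i - t)⁺ - (g j - t)⁺)⁺ + t * cutWeight a {i | 0 < g i} := by
  rw [cutWeight_eq_sum_sum_ite, mul_sum, ← sum_add_distrib]
  refine sum_congr rfl fun i _ => ?_
  rw [mul_sum, ← sum_add_distrib]
  refine sum_congr rfl fun j _ => ?_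
  rw [posPart_sub_eq_posPart_sub_truncate_add (hg i) (hg j) ht (hgt i) (hgt j)]
  simp only [mem_filter, mem_univ, true_and]
  split_ifs <;> ring

-- Discrete co-area formula: peel off the lowest positive level of `g`, by induction on its support.
theorem mul_sum_le_sum_sum_mul_posPart_sub (a : Matrix ι ι ℝ) (w : ι → ℝ) {h : ℝ}
    {P : Finset ι} (hcut : ∀ S ⊆ P, h * ∑ i ∈ S, w i ≤ cutWeight a S) {g : ι → ℝ}
    (hg : 0 ≤ g) (hgP : ∀ i ∉ P, g i = 0) :
    h * ∑ i, w i * g i ≤ ∑ i, ∑ j, a i j * (g i - g j)⁺ := by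
  induction hn : #{i | 0 < g i} using Nat.strong_induction_on generalizing g with
  | _ n ih =>
  set S : Finset ι := {i | 0 < g i}
  have hmemS (i : ι) : i ∈ S ↔ 0 < g i := by simp [S]
  rcases S.eq_empty_or_nonempty with hS | hS
  · obtain rfl : g = 0 := funext fun i =>
      le_antisymm (not_lt.1 fun hi => by simpa [hS] using (hmemS i).2 hi) (hg i)
    simp
  obtain ⟨i₀, hi₀S, hi₀⟩ := S.exists_mem_eq_inf' hS g
  set t := S.inf' hS g
  have ht : 0 < t := hi₀ ▸ (hmemS i₀).1 hi₀S
  have hgt (i : ι) (hi : 0 < g i) : t ≤ g i := S.inf'_le g ((hmemS i).2 hi)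
  have hcard : #{i | 0 < (g i - t)⁺} < n := by
    refine hn ▸ card_lt_card ⟨fun i hi => ?_, fun hsub => ?_⟩
    · simp only [mem_filter, mem_univ, true_and, posPart_pos_iff, sub_pos] at hi
      exact (hmemS i).2 (ht.trans hi)
    · simpa [← hi₀] using hsub hi₀S
  have hpeeled := ih _ hcard (g := fun i => (g i - t)⁺) (fun i => posPart_nonneg _)
    (fun i hi => by simp [hgP i hi, ht.le]) rfl
  have hcutS := hcut S fun i hi => by_contra fun hiP => by simp [hmemS, hgP i hiP] at hi
  rw [sum_mul_eq_sum_mul_posPart_sub_add w hg ht.le hgt,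
    sum_sum_mul_posPart_sub_eq_add_cutWeight a hg ht.le hgt, mul_add]
  nlinarith

theorem posPart_dotProduct_laplacian_mulVec_le {a : Matrix ι ι ℝ} (hnn : ∀ i j, 0 ≤ a i j)
    {w u : ι → ℝ} {ν : ℝ} (hu : laplacian a *ᵥ u = ν • (w * u)) :
    u⁺ ⬝ᵥ laplacian a *ᵥ u⁺ ≤ ν * ∑ i, w i * u⁺ i ^ 2 := by
  rw [dotProduct, mul_sum]
  refine sum_le_sum fun i _ => ?_
  rcases le_or_gt (u i) 0 with hi | hi
  · simp [posPart_eq_zero.2 hi]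
  have hui : u⁺ i = u i := posPart_eq_self.2 hi.le
  have hLu : (laplacian a *ᵥ u⁺) i ≤ (laplacian a *ᵥ u) i := by
    simp only [laplacian_mulVec_apply, hui]
    exact sum_le_sum fun j _ =>
      mul_le_mul_of_nonneg_left (sub_le_sub_left (le_posPart (u j)) _) (hnn i j)
  calc u⁺ i * (laplacian a *ᵥ u⁺) i ≤ u i * (laplacian a *ᵥ u) i := by
        rw [hui]; exact mul_le_mul_of_nonneg_left hLu hi.le
    _ = ν * (w i * u⁺ i ^ 2) := by
        rw [hu, hui]
        simp only [Pi.smul_apply, Pi.mul_apply, smul_eq_mul]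
        ring

omit [DecidableEq ι] in
theorem mul_sum_sum_mul_add_sq_le {a : Matrix ι ι ℝ} (hsym : a.IsSymm) (hnn : ∀ i j, 0 ≤ a i j)
    {w : ι → ℝ} {wmin δ : ℝ} (hwmin : 0 ≤ wmin) (hw : ∀ i, wmin ≤ w i)
    (hδ : ∀ i, ∑ j, a i j ≤ δ) (f : ι → ℝ) :
    wmin * ∑ i, ∑ j, a i j * (f i + f j) ^ 2 ≤ 4 * δ * ∑ i, w i * f i ^ 2 := by
  have hswap := hsym.sum_sum_mul_swap fun i j => f i ^ 2
  calc wmin * ∑ i, ∑ j, a i j * (f i + f j) ^ 2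
      ≤ wmin * ∑ i, ∑ j, (2 * (a i j * f i ^ 2) + 2 * (a i j * f j ^ 2)) := by
        gcongr with i _ j _
        nlinarith [hnn i j, mul_nonneg (hnn i j) (sq_nonneg (f i - f j))]
    _ = wmin * (4 * ∑ i, (∑ j, a i j) * f i ^ 2) := by
        simp only [sum_add_distrib, ← mul_sum, ← hswap, ← sum_mul]
        ring
    _ ≤ 4 * δ * ∑ i, w i * f i ^ 2 := by
        simp only [mul_sum]
        refine sum_le_sum fun i _ => ?_
        nlinarith [mul_le_mul (hw i) (hδ i) (sum_nonneg fun j _ => hnn i j) (hwmin.trans (hw i)),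
          sq_nonneg (f i)]

omit [DecidableEq ι] in
theorem sq_sum_sum_mul_abs_sq_sub_sq_le {a : Matrix ι ι ℝ} (hnn : ∀ i j, 0 ≤ a i j)
    (f : ι → ℝ) : (∑ i, ∑ j, a i j * |f i ^ 2 - f j ^ 2|) ^ 2
      ≤ (∑ i, ∑ j, a i j * (f i - f j) ^ 2) * ∑ i, ∑ j, a i j * (f i + f j) ^ 2 := by
  simp only [← Fintype.sum_prod_type']
  refine sum_sq_le_sum_mul_sum_of_sq_le_mul _ (fun p _ => mul_nonneg (hnn _ _) (sq_nonneg _))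
    (fun p _ => mul_nonneg (hnn _ _) (sq_nonneg _)) fun p _ => le_of_eq ?_
  rw [mul_pow, sq_abs]
  ring

theorem le_sqrt_of_laplacian_mulVec_eq_smul {a : Matrix ι ι ℝ} (hsym : a.IsSymm)
    (hnn : ∀ i j, 0 ≤ a i j) {w : ι → ℝ} {wmin δ h ν : ℝ} (hwmin : 0 < wmin)
    (hw : ∀ i, wmin ≤ w i) (hδ : ∀ i, ∑ j, a i j ≤ δ) {u : ι → ℝ}
    (hu : laplacian a *ᵥ u = ν • (w * u)) (hpos : ∃ i, 0 < u i)
    (hcut : ∀ S ⊆ ({i | 0 < u i} : Finset ι), h * ∑ i ∈ S, w i ≤ cutWeight a S) :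
    h ≤ √(2 * δ * ν / wmin) := by
  obtain ⟨i₀, hi₀⟩ := hpos
  set A := ∑ i, w i * u⁺ i ^ 2
  have hA : 0 < A := sum_pos' (fun i _ => mul_nonneg (hwmin.trans_le (hw i)).le (sq_nonneg _))
    ⟨i₀, mem_univ _, mul_pos (hwmin.trans_le (hw i₀)) (pow_pos (posPart_pos hi₀) 2)⟩
  have hcoarea : 2 * h * A ≤ ∑ i, ∑ j, a i j * |u⁺ i ^ 2 - u⁺ j ^ 2| := by
    rw [← two_mul_sum_sum_mul_posPart_sub hsym, mul_assoc]
    refine mul_le_mul_of_nonneg_left (mul_sum_le_sum_sum_mul_posPart_sub a w hcut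
      (fun i => sq_nonneg _) fun i hi => ?_) zero_le_two
    simp only [mem_filter, mem_univ, true_and, not_lt] at hi
    simp [posPart_eq_zero.2 hi]
  have hminus : ∑ i, ∑ j, a i j * (u⁺ i - u⁺ j) ^ 2 ≤ 2 * ν * A := by
    rw [sum_sum_mul_sub_sq hsym, mul_assoc]
    exact mul_le_mul_of_nonneg_left (posPart_dotProduct_laplacian_mulVec_le hnn hu) zero_le_two
  have hplus := mul_sum_sum_mul_add_sq_le hsym hnn hwmin.le hw hδ u⁺
  have hCS := sq_sum_sum_mul_abs_sq_sub_sq_le hnn u⁺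
  rcases le_or_gt h 0 with hh | hh
  · exact hh.trans (Real.sqrt_nonneg _)
  refine (le_abs_self h).trans (Real.abs_le_sqrt ?_)
  rw [le_div_iff₀ hwmin]
  have hQm : 0 ≤ ∑ i, ∑ j, a i j * (u⁺ i - u⁺ j) ^ 2 :=
    sum_nonneg fun i _ => sum_nonneg fun j _ => mul_nonneg (hnn i j) (sq_nonneg _)
  have hQp : 0 ≤ ∑ i, ∑ j, a i j * (u⁺ i + u⁺ j) ^ 2 :=
    sum_nonneg fun i _ => sum_nonneg fun j _ => mul_nonneg (hnn i j) (sq_nonneg _)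
  have hsq : (2 * h * A) ^ 2 * wmin ≤ (2 * ν * A) * (4 * δ * A) := calc
    (2 * h * A) ^ 2 * wmin ≤ (∑ i, ∑ j, a i j * |u⁺ i ^ 2 - u⁺ j ^ 2|) ^ 2 * wmin := by
        gcongr
    _ ≤ (∑ i, ∑ j, a i j * (u⁺ i - u⁺ j) ^ 2) * (∑ i, ∑ j, a i j * (u⁺ i + u⁺ j) ^ 2) * wmin :=
        mul_le_mul_of_nonneg_right hCS hwmin.le
    _ = (∑ i, ∑ j, a i j * (u⁺ i - u⁺ j) ^ 2) * (wmin * ∑ i, ∑ j, a i j * (u⁺ i + u⁺ j) ^ 2) := by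
        ring
    _ ≤ (2 * ν * A) * (4 * δ * A) :=
        mul_le_mul hminus hplus (mul_nonneg hwmin.le hQp) (hQm.trans hminus)
  refine le_of_mul_le_mul_left ?_ (by positivity : (0 : ℝ) < 4 * A ^ 2)
  linear_combination hsq

omit [DecidableEq ι] in
theorem exists_pos_of_sum_mul_eq_zero {w u : ι → ℝ} (hw : ∀ i, 0 < w i)
    (h : ∑ i, w i * u i = 0) (hu : u ≠ 0) : ∃ i, 0 < u i := by
  by_contra! hneg
  refine hu (funext fun i => ?_)
  have := (sum_eq_zero_iff_of_nonpos fun i _ =>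
    mul_nonpos_of_nonneg_of_nonpos (hw i).le (hneg i)).1 h i (mem_univ i)
  exact (mul_eq_zero.1 this).resolve_left (hw i).ne'

theorem exists_sign_sum_pos_le_sum_compl {w : ι → ℝ} (hw : ∀ i, 0 ≤ w i) (u : ι → ℝ) :
    ∃ v ∈ ({u, -u} : Set (ι → ℝ)),
      ∑ i ∈ {i | 0 < v i}, w i ≤ ∑ i ∈ ({i | 0 < v i} : Finset ι)ᶜ, w i := by
  have hdisj (v : ι → ℝ) : ({i | 0 < -v i} : Finset ι) ⊆ ({i | 0 < v i} : Finset ι)ᶜ := fun i => by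
    simp only [mem_filter, mem_univ, true_and, mem_compl]
    intro h h'
    linarith
  have hmono (v : ι → ℝ) := sum_le_sum_of_subset_of_nonneg (hdisj v) fun i _ _ => hw i
  rcases le_total (∑ i ∈ {i | 0 < u i}, w i) (∑ i ∈ {i | 0 < -u i}, w i) with h | h
  · exact ⟨u, .inl rfl, h.trans (hmono u)⟩
  · refine ⟨-u, .inr rfl, h.trans ?_⟩
    simpa using hmono (-u)

theorem mul_sum_le_cutWeight_of_sum_le_sum_compl {a : Matrix ι ι ℝ} {w : ι → ℝ}
    (hw : ∀ i, 0 < w i) {h : ℝ} (hcheeger : ∀ S : Finset ι, S.Nonempty → S ≠ univ →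
      h ≤ cutWeight a S / min (∑ i ∈ S, w i) (∑ i ∈ Sᶜ, w i))
    {P : Finset ι} (hP : ∑ i ∈ P, w i ≤ ∑ i ∈ Pᶜ, w i) (S : Finset ι) (hSP : S ⊆ P) :
    h * ∑ i ∈ S, w i ≤ cutWeight a S := by
  rcases S.eq_empty_or_nonempty with rfl | hS
  · simp [cutWeight]
  have hSw : 0 < ∑ i ∈ S, w i := sum_pos (fun i _ => hw i) hS
  have hle : ∑ i ∈ S, w i ≤ ∑ i ∈ Sᶜ, w i := calc
    ∑ i ∈ S, w i ≤ ∑ i ∈ P, w i := sum_le_sum_of_subset_of_nonneg hSP fun i _ _ => (hw i).le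
    _ ≤ ∑ i ∈ Pᶜ, w i := hP
    _ ≤ ∑ i ∈ Sᶜ, w i :=
      sum_le_sum_of_subset_of_nonneg (compl_subset_compl.2 hSP) fun i _ _ => (hw i).le
  have hSu : S ≠ univ := by
    rintro rfl
    simp only [compl_univ, sum_empty] at hle
    linarith
  have := hcheeger S hS hSu
  rwa [min_eq_left hle, le_div_iff₀ hSw] at this

theorem le_sqrt_of_laplacian_mulVec_eq_smul_of_sum_mul_eq_zero {a : Matrix ι ι ℝ}
    (hsym : a.IsSymm) (hnn : ∀ i j, 0 ≤ a i j) {w : ι → ℝ} {wmin δ h ν : ℝ} (hwmin : 0 < wmin)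
    (hw : ∀ i, wmin ≤ w i) (hδ : ∀ i, ∑ j, a i j ≤ δ)
    (hcheeger : ∀ S : Finset ι, S.Nonempty → S ≠ univ →
      h ≤ cutWeight a S / min (∑ i ∈ S, w i) (∑ i ∈ Sᶜ, w i))
    {u : ι → ℝ} (hu : laplacian a *ᵥ u = ν • (w * u)) (hsum : ∑ i, w i * u i = 0) (hu0 : u ≠ 0) :
    h ≤ √(2 * δ * ν / wmin) := by
  have hwpos (i : ι) : 0 < w i := hwmin.trans_le (hw i)
  obtain ⟨v, hv, hlight⟩ := exists_sign_sum_pos_le_sum_compl (fun i => (hwpos i).le) u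
  have hv' : laplacian a *ᵥ v = ν • (w * v) ∧ ∃ i, 0 < v i := by
    rcases hv with rfl | rfl
    · exact ⟨hu, exists_pos_of_sum_mul_eq_zero hwpos hsum hu0⟩
    · refine ⟨by rw [mulVec_neg, hu, mul_neg, smul_neg],
        exists_pos_of_sum_mul_eq_zero hwpos ?_ (neg_ne_zero.2 hu0)⟩
      simp [hsum]
  exact le_sqrt_of_laplacian_mulVec_eq_smul hsym hnn hwmin hw hδ hv'.1 hv'.2
    (mul_sum_le_cutWeight_of_sum_le_sum_compl hwpos hcheeger hlight)

theorem eq_of_laplacian_mulVec_eq_zero {a : Matrix ι ι ℝ} (hsym : a.IsSymm)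
    (hnn : ∀ i j, 0 ≤ a i j) (hconn : ∀ S : Finset ι, S.Nonempty → S ≠ univ → 0 < cutWeight a S)
    {u : ι → ℝ} (hu : laplacian a *ᵥ u = 0) (i j : ι) : u i = u j := by
  have hterm (k l : ι) : a k l * (u k - u l) ^ 2 = 0 := by
    have h := sum_sum_mul_sub_sq hsym u
    rw [hu, dotProduct_zero, mul_zero, ← Fintype.sum_prod_type'] at h
    exact (sum_eq_zero_iff_of_nonneg fun p _ => mul_nonneg (hnn _ _) (sq_nonneg _)).1 h (k, l)
      (mem_univ _)
  by_contra hij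
  set S : Finset ι := {k | u k = u i}
  refine (hconn S ⟨i, by simp [S]⟩ fun hS => hij ?_).ne'
    (sum_eq_zero fun k hk => sum_eq_zero fun l hl => ?_)
  · have : j ∈ S := hS ▸ mem_univ j
    simpa [S, eq_comm] using this
  · simp only [S, mem_compl, mem_filter, mem_univ, true_and] at hk hl
    have := hterm k l
    rw [mul_eq_zero] at this
    exact this.resolve_right (pow_ne_zero 2 (sub_ne_zero.2 (by rw [hk]; exact Ne.symm hl)))

theorem nonneg_of_laplacian_mulVec_eq_smul {a : Matrix ι ι ℝ} (hsym : a.IsSymm)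
    (hnn : ∀ i j, 0 ≤ a i j) {w : ι → ℝ} (hw : ∀ i, 0 < w i) {u : ι → ℝ} {ν : ℝ}
    (hu : laplacian a *ᵥ u = ν • (w * u)) (hu0 : u ≠ 0) : 0 ≤ ν := by
  have hquad : u ⬝ᵥ laplacian a *ᵥ u = ν * ∑ i, w i * u i ^ 2 := by
    simp only [hu, dotProduct, mul_sum, Pi.smul_apply, Pi.mul_apply, smul_eq_mul]
    exact sum_congr rfl fun i _ => by ring
  have hnonneg : 0 ≤ u ⬝ᵥ laplacian a *ᵥ u := by
    have := sum_sum_mul_sub_sq hsym u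
    have : 0 ≤ ∑ i, ∑ j, a i j * (u i - u j) ^ 2 :=
      sum_nonneg fun i _ => sum_nonneg fun j _ => mul_nonneg (hnn i j) (sq_nonneg _)
    linarith
  obtain ⟨k, hk⟩ := Function.ne_iff.1 hu0
  have hpos : 0 < ∑ i, w i * u i ^ 2 :=
    sum_pos' (fun i _ => mul_nonneg (hw i).le (sq_nonneg _))
      ⟨k, mem_univ k, mul_pos (hw k) (sq_pos_of_ne_zero hk)⟩
  exact nonneg_of_mul_nonneg_left (hquad ▸ hnonneg) hpos

theorem normalizedLaplacian_mulVec_sqrt (a : Matrix ι ι ℝ) {w : ι → ℝ} (hw : ∀ i, 0 < w i) :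
    normalizedLaplacian a w *ᵥ (fun i => √(w i)) = 0 := by
  have hs : diagonal (fun i => (√(w i))⁻¹) *ᵥ (fun i => √(w i)) = fun _ => 1 := by
    ext i
    simp [mulVec_diagonal, (Real.sqrt_pos.2 (hw i)).ne']
  rw [normalizedLaplacian, ← mulVec_mulVec, hs, ← mulVec_mulVec, laplacian_mulVec_const,
    mulVec_zero]

theorem laplacian_mulVec_div_sqrt_eq_smul {a : Matrix ι ι ℝ} {w : ι → ℝ} (hw : ∀ i, 0 < w i)
    {x : ι → ℝ} {ν : ℝ} (hx : normalizedLaplacian a w *ᵥ x = ν • x) :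
    laplacian a *ᵥ (fun i => x i / √(w i)) = ν • (w * fun i => x i / √(w i)) := by
  have hu : diagonal (fun i => (√(w i))⁻¹) *ᵥ x = fun i => x i / √(w i) := by
    ext i
    simp [mulVec_diagonal, div_eq_inv_mul]
  rw [normalizedLaplacian, ← mulVec_mulVec, ← mulVec_mulVec, hu] at hx
  ext i
  have hi := congrFun hx i
  have hsqrt := (Real.sqrt_pos.2 (hw i)).ne'
  simp only [mulVec_diagonal, Pi.smul_apply, smul_eq_mul, Pi.mul_apply] at hi ⊢
  field_simp at hi ⊢
  rw [hi]
  linear_combination (ν * x i) * Real.sq_sqrt (hw i).le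

theorem eq_smul_sqrt_of_normalizedLaplacian_mulVec_eq_zero {a : Matrix ι ι ℝ} (hsym : a.IsSymm)
    (hnn : ∀ i j, 0 ≤ a i j) (hconn : ∀ S : Finset ι, S.Nonempty → S ≠ univ → 0 < cutWeight a S)
    {w : ι → ℝ} (hw : ∀ i, 0 < w i) {x : ι → ℝ} (hx : normalizedLaplacian a w *ᵥ x = 0)
    (i₀ : ι) : x = (x i₀ / √(w i₀)) • fun i => √(w i) := by
  have hu := laplacian_mulVec_div_sqrt_eq_smul hw (hx.trans (zero_smul ℝ x).symm)
  rw [zero_smul] at hu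
  ext i
  have hi := eq_of_laplacian_mulVec_eq_zero hsym hnn hconn hu i i₀
  simp only [Pi.smul_apply, smul_eq_mul] at hi ⊢
  rw [← hi, div_mul_cancel₀ _ (Real.sqrt_pos.2 (hw i)).ne']

theorem Orthonormal.eq_of_eq_smul {κ E : Type*} [NormedAddCommGroup E] [InnerProductSpace ℝ E]
    {v : κ → E} (hv : Orthonormal ℝ v) {s : E} {i j : κ} {c d : ℝ} (hi : v i = c • s)
    (hj : v j = d • s) : i = j := by
  by_contra hij
  have horth : inner ℝ (v i) (v j) = 0 := hv.2 hij
  have hni := hv.1 i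
  have hnj := hv.1 j
  rw [hi, hj, real_inner_smul_left, real_inner_smul_right, real_inner_self_eq_norm_sq] at horth
  rw [hi, norm_smul, Real.norm_eq_abs] at hni
  rw [hj, norm_smul, Real.norm_eq_abs] at hnj
  have : (c * (d * ‖s‖ ^ 2)) ^ 2 = (|c| * ‖s‖) ^ 2 * (|d| * ‖s‖) ^ 2 := by
    simp only [mul_pow, sq_abs]; ring
  rw [horth, hni, hnj] at this
  norm_num at this

omit [DecidableEq ι] in
theorem Matrix.IsSymm.dotProduct_eq_zero_of_mulVec_eq_smul {M : Matrix ι ι ℝ} (hM : M.IsSymm)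
    {s x : ι → ℝ} {ν : ℝ} (hs : M *ᵥ s = 0) (hx : M *ᵥ x = ν • x) (hν : ν ≠ 0) :
    s ⬝ᵥ x = 0 := by
  have h : ν * (s ⬝ᵥ x) = 0 := by
    rw [← smul_eq_mul, ← dotProduct_smul, ← hx, dotProduct_mulVec, ← mulVec_transpose, hM.eq, hs,
      zero_dotProduct]
  exact (mul_eq_zero.1 h).resolve_left hν

theorem eigenvectorBasis_div_sqrt_ne_zero {A : Matrix ι ι ℝ} (hA : A.IsHermitian) {w : ι → ℝ}
    (hw : ∀ i, 0 < w i) (k : ι) : (fun i => hA.eigenvectorBasis k i / √(w i)) ≠ 0 := fun h =>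
  hA.eigenvectorBasis.orthonormal.ne_zero k <| WithLp.ofLp_injective 2 <| funext fun i => by
    simpa [(Real.sqrt_pos.2 (hw i)).ne'] using congrFun h i

section Spectrum

variable {a : Matrix ι ι ℝ} {w : ι → ℝ} (hherm : (normalizedLaplacian a w).IsHermitian)

theorem laplacian_mulVec_eigenvectorBasis_div_sqrt (hw : ∀ i, 0 < w i) (k : ι) :
    laplacian a *ᵥ (fun i => hherm.eigenvectorBasis k i / √(w i))
      = hherm.eigenvalues k • (w * fun i => hherm.eigenvectorBasis k i / √(w i)) :=
  laplacian_mulVec_div_sqrt_eq_smul hw (hherm.mulVec_eigenvectorBasis k)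

theorem eigenvalues_nonneg_of_normalizedLaplacian (hsym : a.IsSymm) (hnn : ∀ i j, 0 ≤ a i j)
    (hw : ∀ i, 0 < w i) (k : ι) : 0 ≤ hherm.eigenvalues k :=
  nonneg_of_laplacian_mulVec_eq_smul hsym hnn hw
    (laplacian_mulVec_eigenvectorBasis_div_sqrt hherm hw k)
    (eigenvectorBasis_div_sqrt_ne_zero hherm hw k)

theorem eq_of_eigenvalues_eq_zero_of_normalizedLaplacian (hsym : a.IsSymm)
    (hnn : ∀ i j, 0 ≤ a i j) (hconn : ∀ S : Finset ι, S.Nonempty → S ≠ univ → 0 < cutWeight a S)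
    (hw : ∀ i, 0 < w i) {j k : ι} (hj : hherm.eigenvalues j = 0) (hk : hherm.eigenvalues k = 0) :
    j = k := by
  have hker (l : ι) (hl : hherm.eigenvalues l = 0) : hherm.eigenvectorBasis l =
      (hherm.eigenvectorBasis l j / √(w j)) • WithLp.toLp 2 (fun i => √(w i)) :=
    WithLp.ofLp_injective 2 <| eq_smul_sqrt_of_normalizedLaplacian_mulVec_eq_zero hsym hnn hconn hw
      (by rw [hherm.mulVec_eigenvectorBasis, hl, zero_smul]) j
  exact hherm.eigenvectorBasis.orthonormal.eq_of_eq_smul (hker j hj) (hker k hk)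

theorem sum_mul_eigenvectorBasis_div_sqrt_eq_zero (hw : ∀ i, 0 < w i) {k : ι}
    (hk : hherm.eigenvalues k ≠ 0) : ∑ i, w i * (hherm.eigenvectorBasis k i / √(w i)) = 0 := by
  have := (isHermitian_iff_isSymm.1 hherm).dotProduct_eq_zero_of_mulVec_eq_smul
    (normalizedLaplacian_mulVec_sqrt a hw) (hherm.mulVec_eigenvectorBasis k) hk
  rw [← this, dotProduct]
  refine sum_congr rfl fun i _ => ?_
  have hsqrt := (Real.sqrt_pos.2 (hw i)).ne'
  field_simp
  linear_combination -(hherm.eigenvectorBasis k i) * Real.sq_sqrt (hw i).le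

end Spectrum

end

open Matrix Finset in
theorem weighted_cheeger_upper_bound {N : ℕ} (hN : 2 ≤ N)
    (a : Matrix (Fin N) (Fin N) ℝ)
    (hsym : a.IsSymm) (hnn : ∀ i j, 0 ≤ a i j)
    -- connectivity: every proper nonempty cut has positive capacity
    (hconn : ∀ S : Finset (Fin N), S.Nonempty → S ≠ Finset.univ →
      0 < ∑ i ∈ S, ∑ j ∈ Sᶜ, a i j)
    (w : Fin N → ℝ) (hw : ∀ i, 0 < w i)
    (LW : Matrix (Fin N) (Fin N) ℝ)
    (hLW : LW = Matrix.diagonal (fun i => (Real.sqrt (w i))⁻¹) *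
      (Matrix.diagonal (fun i => ∑ j, a i j) - a) *
      Matrix.diagonal (fun i => (Real.sqrt (w i))⁻¹))
    (hherm : LW.IsHermitian)
    (μ : Fin N → ℝ) (hmono : Monotone μ)
    (henum : ∃ σ : Equiv.Perm (Fin N), ∀ i, μ i = hherm.eigenvalues (σ i))
    -- maximum weighted node degree and minimum node weight
    (δmax : ℝ) (hδ : IsGreatest {x : ℝ | ∃ i, x = ∑ j, a i j} δmax)
    (wmin : ℝ) (hwmin : IsLeast {x : ℝ | ∃ i, x = w i} wmin)
    -- h_W is the weighted Cheeger constant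
    (hW : ℝ)
    (hCheeger : IsLeast {r : ℝ | ∃ S : Finset (Fin N), S.Nonempty ∧ S ≠ Finset.univ ∧
      r = (∑ i ∈ S, ∑ j ∈ Sᶜ, a i j) / min (∑ i ∈ S, w i) (∑ i ∈ Sᶜ, w i)} hW) :
    hW ≤ Real.sqrt (2 * δmax * μ ⟨1, by omega⟩ / wmin) := by
  obtain ⟨σ, hσ⟩ := henum
  replace hLW : LW = normalizedLaplacian a w := hLW
  subst hLW
  set k₀ : Fin N := ⟨0, by omega⟩
  set k₁ : Fin N := ⟨1, by omega⟩
  have hμ₁ : hherm.eigenvalues (σ k₁) ≠ 0 := fun h₁ => by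
    have h₀ : hherm.eigenvalues (σ k₀) = 0 := le_antisymm
      (by simpa only [hσ, h₁] using hmono (show k₀ ≤ k₁ from Fin.mk_le_mk.2 zero_le_one))
      (eigenvalues_nonneg_of_normalizedLaplacian hherm hsym hnn hw _)
    simpa [k₀, k₁] using
      σ.injective (eq_of_eigenvalues_eq_zero_of_normalizedLaplacian hherm hsym hnn hconn hw h₀ h₁)
  rw [hσ k₁]
  exact le_sqrt_of_laplacian_mulVec_eq_smul_of_sum_mul_eq_zero hsym hnn
    (by obtain ⟨i, rfl⟩ := hwmin.1; exact hw i) (fun i => hwmin.2 ⟨i, rfl⟩)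
    (fun i => hδ.2 ⟨i, rfl⟩) (fun S hS hSu => hCheeger.2 ⟨S, hS, hSu, rfl⟩)
    (laplacian_mulVec_eigenvectorBasis_div_sqrt hherm hw _)
    (sum_mul_eigenvectorBasis_div_sqrt_eq_zero hherm hw hμ₁)
    (eigenvectorBasis_div_sqrt_ne_zero hherm hw _)
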